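/- Let μ_f ≥ 0, γ₀ > 0, and define the sequence γ_{k+1} = (μ_f α_k + γ_k)/(1 + α_k) for arbitrary positive step sizes α_k > 0, and θ₀ = 1, θ_{k+1} = θ_k/(1+α_k). Then for all k ≥ 0: max{γ₀ θ_k, min{μ_f, γ₀}} ≤ γ_k ≤ max{μ_f, γ₀}. -/
import Mathlib

/-- Bounds for the discrete scaling parameters
`γ_{k+1} = (μ_f α_k + γ_k)/(1+α_k)` with arbitrary positive step sizes. -/
theorem discrete_scaling_parameter_bounds (μf γ0 : ℝ) (hμf : 0 ≤ μf) (hγ0 : 0 < γ0)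
    (α γ θ : ℕ → ℝ) (hα : ∀ k, 0 < α k)
    (hγinit : γ 0 = γ0)
    (hγrec : ∀ k, γ (k+1) = (μf * α k + γ k) / (1 + α k))
    (hθinit : θ 0 = 1)
    (hθrec : ∀ k, θ (k+1) = θ k / (1 + α k)) :
    ∀ k, max (γ0 * θ k) (min μf γ0) ≤ γ k ∧ γ k ≤ max μf γ0 := by
  intro k
  induction k with
  | zero =>
    constructor
    · rw [hγinit, hθinit]
      simp [max_le_iff, min_le_iff, le_of_lt hγ0]
    · rw [hγinit]; exact le_max_right _ _
  | succ k ih =>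
    obtain ⟨h1, h2⟩ := ih
    have hθle : γ0 * θ k ≤ γ k := le_trans (le_max_left _ _) h1
    have hmin : min μf γ0 ≤ γ k := le_trans (le_max_right _ _) h1
    have hpos : 0 < 1 + α k := by linarith [hα k]
    rw [hγrec, hθrec]
    refine ⟨max_le ?_ ?_, ?_⟩
    · rw [mul_div_assoc']
      apply div_le_div_of_nonneg_right ?_ hpos.le |>.trans_eq rfl
      nlinarith [hα k]
    · rw [le_div_iff₀ hpos]
      have h3 : min μf γ0 ≤ μf := min_le_left _ _
      nlinarith [hα k]
    · rw [div_le_iff₀ hpos]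
      have h4 : μf ≤ max μf γ0 := le_max_left _ _
      nlinarith [hα k]
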